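/- arXiv:2407.13287 — 6 statements merged into one kernel-verified Lean document; each statement's English description precedes it below -/
import Mathlib

section
/- For a formal context (G, M, I), a pair (A, B) with A ⊆ G and B ⊆ M is a formal concept of (G, M, I) if and only if (A, complement of B in M) is a property oriented concept of the complemented context (G, M, G×M \ I). -/
/-- (A, B) is a formal concept of (G, M, I) iff (A, Bᶜ) is a property oriented
concept of the complemented context (G, M, (G×M) \ I). -/
theorem fca_formal_iff_property_oriented_complement {G M : Type*}
    (I : G → M → Prop) (A : Set G) (B : Set M) :
    ({m | ∀ g ∈ A, I g m} = B ∧ {g | ∀ m ∈ B, I g m} = A) ↔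
    ({m | ∃ g ∈ A, ¬ I g m} = Bᶜ ∧ {g | ∀ m, ¬ I g m → m ∈ Bᶜ} = A) := by
  have h1 : {m | ∃ g ∈ A, ¬ I g m} = {m | ∀ g ∈ A, I g m}ᶜ := by
    ext m; simp [not_forall]
  have h2 : {g | ∀ m, ¬ I g m → m ∈ Bᶜ} = {g | ∀ m ∈ B, I g m} := by
    ext g; constructor
    · intro h m hm; by_contra hI; exact h m hI hm
    · intro h m hI hm; exact hI (h m hm)
  rw [h1, h2, compl_inj_iff]
end

section
/- For a formal context (G, M, I), a pair (A, B) is a property oriented concept if and only if (complement of A, complement of B) is an object oriented concept. -/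
/-- (A, B) is a property oriented concept iff (Aᶜ, Bᶜ) is an object oriented
concept. -/
theorem fca_property_iff_object_complement {G M : Type*} (I : G → M → Prop)
    (A : Set G) (B : Set M) :
    ({m | ∃ g ∈ A, I g m} = B ∧ {g | ∀ m, I g m → m ∈ B} = A) ↔
    ({m | ∀ g, I g m → g ∈ Aᶜ} = Bᶜ ∧ {g | ∃ m ∈ Bᶜ, I g m} = Aᶜ) := by
  have e1 : {m | ∀ g, I g m → g ∈ Aᶜ} = {m | ∃ g ∈ A, I g m}ᶜ := by
    ext m; simp [not_exists]; tauto
  have e2 : {g | ∃ m ∈ Bᶜ, I g m} = {g | ∀ m, I g m → m ∈ B}ᶜ := by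
    ext g; simp [not_forall]; tauto
  rw [e1, e2, compl_inj_iff, compl_inj_iff, and_comm]
end

section
/- For a formal context (G, M, I), the lattice of property oriented concepts (ordered by inclusion of first components) is dually isomorphic to the lattice of object oriented concepts, via the map (A, B) ↦ (complement of A, complement of B). -/
/-- The lattice of property oriented concepts is dually isomorphic to the
lattice of object oriented concepts via (A, B) ↦ (Aᶜ, Bᶜ). -/
theorem fca_property_object_dual_isomorphism {G M : Type*} (I : G → M → Prop) :
    ∃ f : {p : Set G × Set M //
            {m | ∃ g ∈ p.1, I g m} = p.2 ∧ {g | ∀ m, I g m → m ∈ p.2} = p.1} ≃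
          {p : Set G × Set M //
            {m | ∀ g, I g m → g ∈ p.1} = p.2 ∧ {g | ∃ m ∈ p.2, I g m} = p.1},
      (∀ p, (f p).1.1 = p.1.1ᶜ ∧ (f p).1.2 = p.1.2ᶜ) ∧
      (∀ p q, p.1.1 ⊆ q.1.1 ↔ (f q).1.1 ⊆ (f p).1.1) := by
  refine ⟨⟨fun p => ⟨(p.1.1ᶜ, p.1.2ᶜ), ?_, ?_⟩,
          fun p => ⟨(p.1.1ᶜ, p.1.2ᶜ), ?_, ?_⟩, ?_, ?_⟩, fun p => ⟨rfl, rfl⟩, ?_⟩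
  · obtain ⟨⟨A, B⟩, hB, hA⟩ := p
    ext m
    have h := Set.ext_iff.mp hB m
    simp only [Set.mem_setOf_eq] at h ⊢
    simp only [Set.mem_compl_iff, ← h]
    push_neg
    tauto
  · obtain ⟨⟨A, B⟩, hB, hA⟩ := p
    ext g
    have h := Set.ext_iff.mp hA g
    simp only [Set.mem_setOf_eq] at h ⊢
    simp only [Set.mem_compl_iff, ← h]
    push_neg
    tauto
  · obtain ⟨⟨A, B⟩, hB, hA⟩ := p
    ext m
    have h := Set.ext_iff.mp hB m
    simp only [Set.mem_setOf_eq] at h ⊢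
    simp only [Set.mem_compl_iff, ← h]
    push_neg
    tauto
  · obtain ⟨⟨A, B⟩, hB, hA⟩ := p
    ext g
    have h := Set.ext_iff.mp hA g
    simp only [Set.mem_setOf_eq] at h ⊢
    simp only [Set.mem_compl_iff, ← h]
    push_neg
    tauto
  · intro p; ext : 2 <;> simp
  · intro p; ext : 2 <;> simp
  · intro p q
    constructor
    · intro h g hg
      exact fun hq => hg (h hq)
    · intro h g hg
      by_contra hq
      exact h hq hg
end

section
/- In any double Boolean algebra D, the set D_⊓ = {x | x ⊓ x = x} with operations ⊓, x ∨̄ y := ¬̄(¬̄x ⊓ ¬̄y), negation ¬̄, bottom ⊥ and top ¬̄⊥ forms a Boolean algebra. -/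
/-- The operations of a double Boolean algebra. -/
structure DBAOps (D : Type*) where
  sqcup : D → D → D
  sqcap : D → D → D
  neg : D → D
  dneg : D → D
  top : D
  bot : D

/-- Derived join x ∨̄ y := ¬̄(¬̄x ⊓ ¬̄y). -/
def DBAOps.vee {D : Type*} (o : DBAOps D) (x y : D) : D :=
  o.neg (o.sqcap (o.neg x) (o.neg y))

/-- Derived meet x ∧̄ y := ⌟(⌟x ⊔ ⌟y). -/
def DBAOps.wedge {D : Type*} (o : DBAOps D) (x y : D) : D :=
  o.dneg (o.sqcup (o.dneg x) (o.dneg y))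

/-- Wille's axioms for a double Boolean algebra. -/
structure IsDBA {D : Type*} (o : DBAOps D) : Prop where
  ax1a : ∀ x y, o.sqcap (o.sqcap x x) y = o.sqcap x y
  ax1b : ∀ x y, o.sqcup (o.sqcup x x) y = o.sqcup x y
  ax2a : ∀ x y, o.sqcap x y = o.sqcap y x
  ax2b : ∀ x y, o.sqcup x y = o.sqcup y x
  ax3a : ∀ x, o.neg (o.sqcap x x) = o.neg x
  ax3b : ∀ x, o.dneg (o.sqcup x x) = o.dneg x
  ax4a : ∀ x y, o.sqcap x (o.sqcup x y) = o.sqcap x x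
  ax4b : ∀ x y, o.sqcup x (o.sqcap x y) = o.sqcup x x
  ax5a : ∀ x y z, o.sqcap x (o.vee y z) = o.vee (o.sqcap x y) (o.sqcap x z)
  ax5b : ∀ x y z, o.sqcup x (o.wedge y z) = o.wedge (o.sqcup x y) (o.sqcup x z)
  ax6a : ∀ x y, o.sqcap x (o.vee x y) = o.sqcap x x
  ax6b : ∀ x y, o.sqcup x (o.wedge x y) = o.sqcup x x
  ax7a : ∀ x y, o.neg (o.neg (o.sqcap x y)) = o.sqcap x y
  ax7b : ∀ x y, o.dneg (o.dneg (o.sqcup x y)) = o.sqcup x y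
  ax8a : ∀ x, o.sqcap x (o.neg x) = o.bot
  ax8b : ∀ x, o.sqcup x (o.dneg x) = o.top
  ax9a : o.neg o.top = o.bot
  ax9b : o.dneg o.bot = o.top
  ax10a : ∀ x y z, o.sqcap x (o.sqcap y z) = o.sqcap (o.sqcap x y) z
  ax10b : ∀ x y z, o.sqcup x (o.sqcup y z) = o.sqcup (o.sqcup x y) z
  ax11a : o.neg o.bot = o.sqcap o.top o.top
  ax11b : o.dneg o.top = o.sqcup o.bot o.bot
  ax12 : ∀ x, o.sqcup (o.sqcap x x) (o.sqcap x x) = o.sqcap (o.sqcup x x) (o.sqcup x x)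

/-!
On `D_⊓` the double negation `¬̄¬̄x = x ⊓ x` is the identity, so `¬̄` is an involution there and
`x ∨̄ y = ¬̄(¬̄x ⊓ ¬̄y)` is the De Morgan dual of `⊓`. Commutativity and associativity of `∨̄`
are thereby those of `⊓`; distributivity, absorption and complementation are the axioms (5a),
(6a) and (8a) read inside `D_⊓`, and `¬̄⊥ = ⊤ ⊓ ⊤` acts as a unit for `⊓` by (11a), (8b), (4a).
-/

namespace IsDBA

variable {D : Type*} {o : DBAOps D} (h : IsDBA o)
include h

theorem sqcap_idem_sqcap (x y : D) : o.sqcap (o.sqcap x y) (o.sqcap x y) = o.sqcap x y := by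
  rw [← h.ax10a x y, h.ax2a x y, h.ax10a y y x, h.ax1a, h.ax2a y x, h.ax10a, h.ax1a]

theorem neg_neg_eq_sqcap_self (x : D) : o.neg (o.neg x) = o.sqcap x x := by
  rw [← h.ax3a x, h.ax7a]

theorem neg_neg_of_sqcap_self {a : D} (ha : o.sqcap a a = a) : o.neg (o.neg a) = a := by
  rw [h.neg_neg_eq_sqcap_self, ha]

theorem sqcap_idem_neg (x : D) : o.sqcap (o.neg x) (o.neg x) = o.neg x := by
  rw [← h.ax7a (o.neg x) (o.neg x), h.ax3a (o.neg x), h.neg_neg_eq_sqcap_self x, h.ax3a]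

theorem bot_sqcap (x : D) : o.sqcap o.bot x = o.bot := by
  rw [← h.ax8a x, ← h.ax10a, h.ax2a (o.neg x) x, h.ax10a, h.ax1a]

theorem sqcap_neg_bot (x : D) : o.sqcap x (o.neg o.bot) = o.sqcap x x := by
  rw [h.ax11a, h.ax2a x, h.ax1a, h.ax2a o.top, ← h.ax8b x, h.ax4a]

theorem vee_comm (x y : D) : o.vee x y = o.vee y x := by
  unfold DBAOps.vee
  rw [h.ax2a]

theorem vee_assoc (x y z : D) : o.vee (o.vee x y) z = o.vee x (o.vee y z) := by
  unfold DBAOps.vee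
  rw [h.ax7a, h.ax7a, h.ax10a]

theorem neg_sqcap_of_sqcap_self {a b : D} (ha : o.sqcap a a = a) (hb : o.sqcap b b = b) :
    o.neg (o.sqcap a b) = o.vee (o.neg a) (o.neg b) := by
  unfold DBAOps.vee
  rw [h.neg_neg_of_sqcap_self ha, h.neg_neg_of_sqcap_self hb]

theorem sqcap_vee_self {a : D} (ha : o.sqcap a a = a) (b : D) : o.sqcap a (o.vee a b) = a := by
  rw [h.ax6a, ha]

theorem vee_sqcap_self {a b : D} (ha : o.sqcap a a = a) (hb : o.sqcap b b = b) :
    o.vee a (o.sqcap a b) = a := by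
  unfold DBAOps.vee
  rw [h.neg_sqcap_of_sqcap_self ha hb, h.ax6a, h.ax3a, h.neg_neg_of_sqcap_self ha]

theorem vee_neg_self {a : D} (ha : o.sqcap a a = a) : o.vee a (o.neg a) = o.neg o.bot := by
  unfold DBAOps.vee
  rw [h.neg_neg_of_sqcap_self ha, h.ax2a, h.ax8a]

abbrev booleanAlgebra : BooleanAlgebra {x : D // o.sqcap x x = x} :=
  letI : Max {x : D // o.sqcap x x = x} := ⟨fun a b => ⟨o.vee a.1 b.1, h.sqcap_idem_neg _⟩⟩
  letI : Min {x : D // o.sqcap x x = x} :=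
    ⟨fun a b => ⟨o.sqcap a.1 b.1, h.sqcap_idem_sqcap a.1 b.1⟩⟩
  letI : Lattice {x : D // o.sqcap x x = x} :=
    Lattice.mk'
      (fun a b => Subtype.ext (h.vee_comm a.1 b.1))
      (fun a b c => Subtype.ext (h.vee_assoc a.1 b.1 c.1))
      (fun a b => Subtype.ext (h.ax2a a.1 b.1))
      (fun a b c => Subtype.ext (h.ax10a a.1 b.1 c.1).symm)
      (fun a b => Subtype.ext (h.vee_sqcap_self a.2 b.2))
      (fun a b => Subtype.ext (h.sqcap_vee_self a.2 b.1))
  { DistribLattice.ofInfSupLe fun a b c => (Subtype.ext (h.ax5a a.1 b.1 c.1)).le with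
    compl := fun a => ⟨o.neg a.1, h.sqcap_idem_neg a.1⟩
    top := ⟨o.neg o.bot, h.sqcap_idem_neg o.bot⟩
    bot := ⟨o.bot, h.bot_sqcap o.bot⟩
    inf_compl_le_bot := fun a => (Subtype.ext (h.ax8a a.1)).le
    top_le_sup_compl := fun a => (Subtype.ext (h.vee_neg_self a.2)).ge
    le_top := fun a => inf_eq_left.mp (Subtype.ext ((h.sqcap_neg_bot a.1).trans a.2))
    bot_le := fun a => inf_eq_left.mp (Subtype.ext (h.bot_sqcap a.1)) }

end IsDBA

/-- In any double Boolean algebra D, the set D_⊓ = {x | x ⊓ x = x} with meet ⊓,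
join ∨̄, negation ¬̄, bottom ⊥ and top ¬̄⊥ forms a Boolean algebra. -/
theorem dba_Dcap_boolean_algebra {D : Type*} (o : DBAOps D) (h : IsDBA o) :
    ∃ inst : BooleanAlgebra {x : D // o.sqcap x x = x},
      (∀ x y : {x : D // o.sqcap x x = x},
        (inst.inf x y).1 = o.sqcap x.1 y.1) ∧
      (∀ x y : {x : D // o.sqcap x x = x},
        (inst.sup x y).1 = o.vee x.1 y.1) ∧
      (∀ x : {x : D // o.sqcap x x = x},
        (inst.compl x).1 = o.neg x.1) ∧
      (inst.bot.1 = o.bot) ∧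
      (inst.top.1 = o.neg o.bot) :=
  ⟨h.booleanAlgebra, fun _ _ => rfl, fun _ _ => rfl, fun _ => rfl, rfl, rfl⟩
end

section
/- In any double Boolean algebra D, the set D_⊔ = {x | x ⊔ x = x} with operations x ∧̄ y := ⌟(⌟x ⊔ ⌟y), join ⊔, negation ⌟, bottom ⌟⊤ and top ⊤ forms a Boolean algebra. -/
section Aux

variable {D : Type*} {o : DBAOps D}

/-- Any join is idempotent. -/
theorem DBA.sup_idem (h : IsDBA o) (a b : D) :
    o.sqcup (o.sqcup a b) (o.sqcup a b) = o.sqcup a b := by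
  calc o.sqcup (o.sqcup a b) (o.sqcup a b)
      = o.sqcup a (o.sqcup b (o.sqcup a b)) := (h.ax10b _ _ _).symm
    _ = o.sqcup a (o.sqcup (o.sqcup b a) b) := by rw [h.ax10b b a b]
    _ = o.sqcup a (o.sqcup (o.sqcup a b) b) := by rw [h.ax2b b a]
    _ = o.sqcup a (o.sqcup a (o.sqcup b b)) := by rw [← h.ax10b a b b]
    _ = o.sqcup (o.sqcup a a) (o.sqcup b b) := h.ax10b a a (o.sqcup b b)
    _ = o.sqcup a (o.sqcup b b) := h.ax1b a (o.sqcup b b)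
    _ = o.sqcup (o.sqcup b b) a := h.ax2b _ _
    _ = o.sqcup b a := h.ax1b b a
    _ = o.sqcup a b := h.ax2b _ _

theorem DBA.dneg_dneg (h : IsDBA o) (a : D) :
    o.dneg (o.dneg a) = o.sqcup a a := by
  have := h.ax7b a a
  rwa [h.ax3b a] at this

theorem DBA.dneg_idem (h : IsDBA o) (a : D) :
    o.sqcup (o.dneg a) (o.dneg a) = o.dneg a := by
  have h1 : o.dneg (o.dneg (o.dneg a)) = o.sqcup (o.dneg a) (o.dneg a) :=
    DBA.dneg_dneg h (o.dneg a)
  rw [DBA.dneg_dneg h a, h.ax3b a] at h1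
  exact h1.symm

/-- for idempotent a, dneg dneg a = a -/
theorem DBA.dneg_dneg' (h : IsDBA o) {a : D} (ha : o.sqcup a a = a) :
    o.dneg (o.dneg a) = a := by rw [DBA.dneg_dneg h a, ha]

theorem DBA.dneg_wedge (h : IsDBA o) (a b : D) :
    o.dneg (o.wedge a b) = o.sqcup (o.dneg a) (o.dneg b) := by
  unfold DBAOps.wedge
  rw [DBA.dneg_dneg h, DBA.sup_idem h]

theorem DBA.wedge_idem (h : IsDBA o) (a b : D) :
    o.sqcup (o.wedge a b) (o.wedge a b) = o.wedge a b :=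
  DBA.dneg_idem h _

theorem DBA.wedge_comm (h : IsDBA o) (a b : D) :
    o.wedge a b = o.wedge b a := by
  unfold DBAOps.wedge; rw [h.ax2b]

theorem DBA.wedge_assoc (h : IsDBA o) (a b c : D) :
    o.wedge (o.wedge a b) c = o.wedge a (o.wedge b c) := by
  show o.dneg (o.sqcup (o.dneg (o.wedge a b)) (o.dneg c))
     = o.dneg (o.sqcup (o.dneg a) (o.dneg (o.wedge b c)))
  rw [DBA.dneg_wedge h a b, DBA.dneg_wedge h b c,
    ← h.ax10b (o.dneg a) (o.dneg b) (o.dneg c)]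

/-- key absorption: a ∧̄ (a ⊔ b) = a for idempotent a b -/
theorem DBA.wedge_absorb (h : IsDBA o) {a b : D} (ha : o.sqcup a a = a)
    (hb : o.sqcup b b = b) : o.wedge a (o.sqcup a b) = a := by
  have key : o.sqcup (o.dneg a) (o.dneg (o.sqcup a b)) = o.dneg a := by
    have h6 := h.ax6b (o.dneg a) (o.dneg b)
    rw [DBA.dneg_idem h a] at h6
    have hw : o.wedge (o.dneg a) (o.dneg b) = o.dneg (o.sqcup a b) := by
      unfold DBAOps.wedge
      rw [DBA.dneg_dneg' h ha, DBA.dneg_dneg' h hb]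
    rwa [hw] at h6
  unfold DBAOps.wedge
  rw [key, DBA.dneg_dneg' h ha]

theorem DBA.sup_absorb (h : IsDBA o) {a : D} (ha : o.sqcup a a = a) (b : D) :
    o.sqcup a (o.wedge a b) = a := by rw [h.ax6b, ha]

theorem DBA.top_def (h : IsDBA o) : o.sqcup o.top (o.dneg o.top) = o.top :=
  h.ax8b o.top

theorem DBA.top_idem (h : IsDBA o) : o.sqcup o.top o.top = o.top := by
  conv_lhs => rw [← DBA.top_def h]
  rw [DBA.sup_idem h, DBA.top_def h]

theorem DBA.bot_sup (h : IsDBA o) {a : D} (ha : o.sqcup a a = a) :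
    o.sqcup o.bot a = a := by
  have h4 := h.ax4b a (o.neg a)
  rw [h.ax8a, ha] at h4
  rw [h.ax2b]; exact h4

theorem DBA.dnegtop_sup (h : IsDBA o) {a : D} (ha : o.sqcup a a = a) :
    o.sqcup (o.dneg o.top) a = a := by
  rw [h.ax11b, h.ax1b, DBA.bot_sup h ha]

theorem DBA.sup_top (h : IsDBA o) {a : D} (ha : o.sqcup a a = a) :
    o.sqcup a o.top = o.top := by
  conv_lhs => rw [← h.ax8b a, h.ax10b a a (o.dneg a), ha]
  exact h.ax8b a

theorem DBA.wedge_compl (h : IsDBA o) {a : D} (ha : o.sqcup a a = a) :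
    o.wedge a (o.dneg a) = o.dneg o.top := by
  unfold DBAOps.wedge
  rw [DBA.dneg_dneg' h ha, h.ax2b, h.ax8b]

end Aux


/-- In any double Boolean algebra D, the set D_⊔ = {x | x ⊔ x = x} with meet ∧̄,
join ⊔, negation ⌟, bottom ⌟⊤ and top ⊤ forms a Boolean algebra. -/
theorem dba_Dcup_boolean_algebra {D : Type*} (o : DBAOps D) (h : IsDBA o) :
    ∃ inst : BooleanAlgebra {x : D // o.sqcup x x = x},
      (∀ x y : {x : D // o.sqcup x x = x},
        (inst.inf x y).1 = o.wedge x.1 y.1) ∧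
      (∀ x y : {x : D // o.sqcup x x = x},
        (inst.sup x y).1 = o.sqcup x.1 y.1) ∧
      (∀ x : {x : D // o.sqcup x x = x},
        (inst.compl x).1 = o.dneg x.1) ∧
      (inst.bot.1 = o.dneg o.top) ∧
      (inst.top.1 = o.top) := by
  
  letI : Max {x : D // o.sqcup x x = x} :=
    ⟨fun a b => ⟨o.sqcup a.1 b.1, DBA.sup_idem h a.1 b.1⟩⟩
  letI : Min {x : D // o.sqcup x x = x} :=
    ⟨fun a b => ⟨o.wedge a.1 b.1, DBA.wedge_idem h a.1 b.1⟩⟩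
  letI lat : Lattice {x : D // o.sqcup x x = x} := Lattice.mk'
    (fun a b => Subtype.ext (h.ax2b a.1 b.1))
    (fun a b c => Subtype.ext (h.ax10b a.1 b.1 c.1).symm)
    (fun a b => Subtype.ext (DBA.wedge_comm h a.1 b.1))
    (fun a b c => Subtype.ext (DBA.wedge_assoc h a.1 b.1 c.1))
    (fun a b => Subtype.ext (DBA.sup_absorb h a.2 b.1))
    (fun a b => Subtype.ext (DBA.wedge_absorb h a.2 b.2))
  letI distrib : DistribLattice {x : D // o.sqcup x x = x} :=
    { lat with
      le_sup_inf := fun x y z => le_of_eq (Subtype.ext (h.ax5b x.1 y.1 z.1).symm) }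
  letI inst : BooleanAlgebra {x : D // o.sqcup x x = x} :=
    { distrib with
      compl := fun a => ⟨o.dneg a.1, DBA.dneg_idem h a.1⟩
      top := ⟨o.top, DBA.top_idem h⟩
      bot := ⟨o.dneg o.top, DBA.dneg_idem h o.top⟩
      inf_compl_le_bot := fun a => le_of_eq (Subtype.ext (DBA.wedge_compl h a.2))
      top_le_sup_compl := fun a => le_of_eq (Subtype.ext (h.ax8b a.1).symm)
      le_top := fun a => sup_eq_right.mp (Subtype.ext (DBA.sup_top h a.2))
      bot_le := fun a => sup_eq_right.mp (Subtype.ext (DBA.dnegtop_sup h a.2)) }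
  exact ⟨inst, fun x y => rfl, fun x y => rfl, fun x => rfl, rfl, rfl⟩
end

section
/- Let (B, ∧, −, 0, 1) and (B′, ∨′, −′, 0′, 1′) be Boolean algebras, and let r : A → B, e : B → A, r′ : A → B′, e′ : B′ → A be maps with r ∘ e = id_B and r′ ∘ e′ = id_{B′}. Define on A: x ⊓ y = e(r(x) ∧ r(y)), x ⊔ y = e′(r′(x) ∨′ r′(y)), ¬̄x = e(−r(x)), ⌟x = e′(−′r′(x)), ⊤_A = e′(1′), ⊥_A = e(0). If (a) e∘r∘e′∘r′ = e′∘r′∘e∘r, (b) e(r(x) ∧ r(e′(r′(x) ∨′ r′(y)))) = e(r(x)) and e′(r′(x) ∨′ r′(e(r(x) ∧ r(y)))) = e′(r′(x)) for all x, y ∈ A, and (c) r(e′(1′)) = 1 and r′(e(0)) = 0′, then (A, ⊓, ⊔, ¬̄, ⌟, ⊤_A, ⊥_A) is a double Boolean algebra. -/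
/-- Construction of a double Boolean algebra from two Boolean algebras via
retraction pairs (r, e) and (r', e') satisfying conditions (a), (b), (c). -/
theorem dba_from_boolean_algebras {A B B' : Type*}
    [BooleanAlgebra B] [BooleanAlgebra B']
    (r : A → B) (e : B → A) (r' : A → B') (e' : B' → A)
    (hre : ∀ b, r (e b) = b) (hre' : ∀ b, r' (e' b) = b)
    (ha : ∀ x, e (r (e' (r' x))) = e' (r' (e (r x))))
    (hb1 : ∀ x y : A, e (r x ⊓ r (e' (r' x ⊔ r' y))) = e (r x))
    (hb2 : ∀ x y : A, e' (r' x ⊔ r' (e (r x ⊓ r y))) = e' (r' x))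
    (hc1 : r (e' ⊤) = ⊤) (hc2 : r' (e ⊥) = ⊥) :
    IsDBA (D := A)
      { sqcap := fun x y => e (r x ⊓ r y)
        sqcup := fun x y => e' (r' x ⊔ r' y)
        neg := fun x => e (r x)ᶜ
        dneg := fun x => e' (r' x)ᶜ
        top := e' ⊤
        bot := e ⊥ } := by

  constructor
  case ax1a => intro x y; simp [hre]
  case ax1b => intro x y; simp [hre']
  case ax2a => intro x y; simp [inf_comm]
  case ax2b => intro x y; simp [sup_comm]
  case ax3a => intro x; simp [hre]
  case ax3b => intro x; simp [hre']
  case ax4a => intro x y; simpa using hb1 x y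
  case ax4b => intro x y; simpa using hb2 x y
  case ax5a => intro x y z; simp [DBAOps.vee, hre, compl_inf, inf_sup_left]
  case ax5b => intro x y z; simp [DBAOps.wedge, hre', compl_sup, sup_inf_left]
  case ax6a => intro x y; simp [DBAOps.vee, hre, compl_inf, inf_sup_self]
  case ax6b => intro x y; simp [DBAOps.wedge, hre', compl_sup, sup_inf_self]
  case ax7a => intro x y; simp [hre]
  case ax7b => intro x y; simp [hre']
  case ax8a => intro x; simp [hre]
  case ax8b => intro x; simp [hre']
  case ax9a => simp [hc1]
  case ax9b => simp [hc2]
  case ax10a => intro x y z; simp [hre, inf_assoc]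
  case ax10b => intro x y z; simp [hre', sup_assoc]
  case ax11a => simp [hre, hc1]
  case ax11b => simp [hre', hc2]
  case ax12 => intro x; simp [hre, hre', ha x]
end
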